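/- arXiv:2204.07685 — 4 statements merged into one kernel-verified Lean document; each statement's English description precedes it below -/
import Mathlib

section
/- Let A be an m×m real orthogonal matrix and x₁,…,xₙ vectors in R^m. Then Σ_{i,j} ⟨x_i, A x_j⟩² ≤ Σ_{i,j} ⟨x_i, x_j⟩². -/
/-!
With `X` the matrix whose rows are the `xᵢ` and `P = XᵀX`, both sides are squared Frobenius
norms: the left one is `tr ((XAXᵀ)ᵀ(XAXᵀ)) = ⟨P, AᵀPA⟩_F` and the right one is
`tr ((XXᵀ)²) = ⟨P, P⟩_F`. Conjugation by an orthogonal matrix preserves the Frobenius norm, so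
Cauchy–Schwarz gives `⟨P, AᵀPA⟩_F ≤ ‖P‖_F ‖AᵀPA‖_F = ‖P‖_F²`.
-/

open Matrix

namespace Matrix

variable {R : Type*} {m n : Type*} [Fintype m]

section CommRing

variable [CommRing R]

theorem mul_mul_transpose_apply (X : Matrix n m R) (A : Matrix m m R) (i j : n) :
    (X * A * Xᵀ) i j = X i ⬝ᵥ A *ᵥ X j := by
  rw [mul_apply', dotProduct_mulVec]
  rfl

variable [Fintype n]

theorem trace_transpose_mul_eq_sum (M N : Matrix m n R) :
    trace (Mᵀ * N) = ∑ i, ∑ j, M i j * N i j := by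
  simp only [trace, diag, mul_apply, transpose_apply]
  exact Finset.sum_comm

theorem trace_transpose_mul_self_mul_mul_transpose (X : Matrix n m R) (A : Matrix m m R) :
    trace ((X * A * Xᵀ)ᵀ * (X * A * Xᵀ)) = trace ((Xᵀ * X)ᵀ * (Aᵀ * (Xᵀ * X) * A)) := by
  simp only [transpose_mul, transpose_transpose, ← Matrix.mul_assoc]
  rw [trace_mul_comm _ Xᵀ]
  simp only [Matrix.mul_assoc]

theorem sum_sq_dotProduct_mulVec_eq_trace (X : Matrix n m R) (A : Matrix m m R) :
    ∑ i, ∑ j, (X i ⬝ᵥ A *ᵥ X j) ^ 2 = trace ((Xᵀ * X)ᵀ * (Aᵀ * (Xᵀ * X) * A)) := by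
  rw [← trace_transpose_mul_self_mul_mul_transpose, trace_transpose_mul_eq_sum]
  simp only [mul_mul_transpose_apply, sq]

theorem trace_transpose_mul_self_conj [DecidableEq m] (P A : Matrix m m R) (hA : A * Aᵀ = 1) :
    trace ((Aᵀ * P * A)ᵀ * (Aᵀ * P * A)) = trace (Pᵀ * P) := by
  simp only [transpose_mul, transpose_transpose, Matrix.mul_assoc]
  rw [← Matrix.mul_assoc A Aᵀ, hA, Matrix.one_mul, trace_mul_comm, Matrix.mul_assoc,
    Matrix.mul_assoc, hA, Matrix.mul_one]

end CommRing

section Ordered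

variable [Fintype n] [CommRing R] [LinearOrder R] [IsStrictOrderedRing R]

theorem trace_transpose_mul_sq_le (M N : Matrix m n R) :
    trace (Mᵀ * N) ^ 2 ≤ trace (Mᵀ * M) * trace (Nᵀ * N) := by
  simp only [trace_transpose_mul_eq_sum, ← Fintype.sum_prod_type', ← sq]
  exact Finset.sum_mul_sq_le_sq_mul_sq _ _ _

theorem trace_transpose_mul_le_of_trace_eq {M N : Matrix m n R}
    (h : trace (Nᵀ * N) = trace (Mᵀ * M)) : trace (Mᵀ * N) ≤ trace (Mᵀ * M) := by
  refine le_of_sq_le_sq ?_ ?_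
  · simpa [h, sq] using trace_transpose_mul_sq_le M N
  · rw [trace_transpose_mul_eq_sum]
    exact Finset.sum_nonneg fun i _ => Finset.sum_nonneg fun j _ => mul_self_nonneg _

end Ordered

end Matrix

/-- For A orthogonal and x₁,…,xₙ ∈ ℝ^m, Σ_{i,j} ⟨x_i, A x_j⟩² ≤ Σ_{i,j} ⟨x_i, x_j⟩². -/
theorem sum_sq_inner_orthogonal_le (m n : ℕ) (A : Matrix (Fin m) (Fin m) ℝ)
    (hA : Aᵀ * A = 1) (x : Fin n → Fin m → ℝ) :
    ∑ i : Fin n, ∑ j : Fin n, (x i ⬝ᵥ A.mulVec (x j)) ^ 2 ≤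
      ∑ i : Fin n, ∑ j : Fin n, (x i ⬝ᵥ x j) ^ 2 := by
  have hAAt : A * Aᵀ = 1 := mul_eq_one_comm.mp hA
  let X : Matrix (Fin n) (Fin m) ℝ := of x
  calc ∑ i, ∑ j, (x i ⬝ᵥ A *ᵥ x j) ^ 2
      = trace ((Xᵀ * X)ᵀ * (Aᵀ * (Xᵀ * X) * A)) := sum_sq_dotProduct_mulVec_eq_trace X A
    _ ≤ trace ((Xᵀ * X)ᵀ * (Xᵀ * X)) :=
      trace_transpose_mul_le_of_trace_eq (trace_transpose_mul_self_conj _ _ hAAt)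
    _ = trace ((Xᵀ * X)ᵀ * (1ᵀ * (Xᵀ * X) * 1)) := by
      rw [transpose_one, Matrix.one_mul, Matrix.mul_one]
    _ = ∑ i, ∑ j, (x i ⬝ᵥ (1 : Matrix (Fin m) (Fin m) ℝ) *ᵥ x j) ^ 2 :=
      (sum_sq_dotProduct_mulVec_eq_trace X 1).symm
    _ = ∑ i, ∑ j, (x i ⬝ᵥ x j) ^ 2 := by simp only [one_mulVec]
end

section
/- Let A be an m×m real orthogonal matrix and x₁,…,xₙ ∈ R^m, with X the m×n matrix whose columns are the x_i. If Σ_{i,j} ⟨x_i, A x_j⟩² = Σ_{i,j} ⟨x_i, x_j⟩², then X X^T commutes with A. -/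
/-!
Put `S = X Xᵀ` and `T = Aᵀ S A`. The two sums are the squared Frobenius norms of `Xᵀ A X` and
`Xᵀ X`, that is `tr (T S)` and `tr (S S)`, and `tr (T T) = tr (S S)` because `A` is orthogonal.
Hence `‖T - S‖² = tr (T T) - 2 tr (T S) + tr (S S) = 0`, so `Aᵀ S A = S`, i.e. `S A = A S`.
-/

open Matrix

namespace Matrix

variable {ι κ R : Type*} [Fintype κ]

theorem trace_transpose_mul_self_eq_zero_iff [Fintype ι] [Ring R] [LinearOrder R]
    [IsStrictOrderedRing R] {N : Matrix ι κ R} : (Nᵀ * N).trace = 0 ↔ N = 0 := by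
  rw [← vec_dotProduct_vec, dotProduct_self_eq_zero, vec_eq_zero_iff]

theorem sum_sq_apply_eq_trace_transpose_mul_self [Fintype ι] [CommSemiring R]
    (N : Matrix ι κ R) : ∑ i, ∑ j, N i j ^ 2 = (Nᵀ * N).trace := by
  simp only [trace, diag, mul_apply, transpose_apply, sq]
  exact Finset.sum_comm

theorem of_mul_mul_transpose_apply [CommSemiring R] (x : ι → κ → R) (B : Matrix κ κ R)
    (i j : ι) : (of x * B * (of x)ᵀ) i j = x i ⬝ᵥ B *ᵥ x j := by
  rw [mul_apply', mul_apply_eq_vecMul, dotProduct_mulVec]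
  rfl

theorem sum_sq_dotProduct_mulVec [Fintype ι] [CommSemiring R] (x : ι → κ → R)
    (B : Matrix κ κ R) :
    ∑ i, ∑ j, (x i ⬝ᵥ B *ᵥ x j) ^ 2 =
      (Bᵀ * ((of x)ᵀ * of x) * B * ((of x)ᵀ * of x)).trace := by
  simp_rw [← of_mul_mul_transpose_apply, sum_sq_apply_eq_trace_transpose_mul_self,
    transpose_mul, transpose_transpose]
  simp only [Matrix.mul_assoc]
  rw [trace_mul_comm]
  simp only [Matrix.mul_assoc]

theorem eq_of_trace_mul_self_eq [CommRing R] [LinearOrder R] [IsStrictOrderedRing R]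
    {S T : Matrix κ κ R} (hS : S.IsSymm) (hT : T.IsSymm)
    (hTT : (T * T).trace = (S * S).trace) (hTS : (T * S).trace = (S * S).trace) : T = S := by
  rw [← sub_eq_zero, ← trace_transpose_mul_self_eq_zero_iff, transpose_sub, hS.eq, hT.eq]
  simp only [sub_mul, mul_sub, trace_sub, trace_mul_comm S T, hTT, hTS, sub_self]

theorem trace_conj_mul_conj [CommSemiring R] [DecidableEq κ] {A : Matrix κ κ R}
    (hA : A * Aᵀ = 1) (S T : Matrix κ κ R) :
    (Aᵀ * S * A * (Aᵀ * T * A)).trace = (S * T).trace := by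
  rw [show Aᵀ * S * A * (Aᵀ * T * A) = Aᵀ * (S * (A * Aᵀ) * T * A) by
      simp only [Matrix.mul_assoc],
    hA, Matrix.mul_one, trace_mul_comm, Matrix.mul_assoc, hA, Matrix.mul_one]

theorem commute_of_trace_conj_mul_eq [CommRing R] [LinearOrder R] [IsStrictOrderedRing R]
    [DecidableEq κ] {A S : Matrix κ κ R} (hA : Aᵀ * A = 1) (hS : S.IsSymm)
    (h : (Aᵀ * S * A * S).trace = (S * S).trace) : Commute S A := by
  have hA' : A * Aᵀ = 1 := mul_eq_one_comm.mp hA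
  have hconj : Aᵀ * S * A = S := by
    refine eq_of_trace_mul_self_eq hS ?_ (trace_conj_mul_conj hA' S S) h
    rw [IsSymm, transpose_mul, transpose_mul, transpose_transpose, hS.eq, Matrix.mul_assoc]
  calc S * A = A * Aᵀ * S * A := by rw [hA', Matrix.one_mul]
    _ = A * (Aᵀ * S * A) := by simp only [Matrix.mul_assoc]
    _ = A * S := by rw [hconj]

end Matrix

/-- If equality holds in the inequality Σ⟨x_i,Ax_j⟩² ≤ Σ⟨x_i,x_j⟩², then XXᵀ commutes
with A, where X is the matrix with columns x_i. -/
theorem commutes_of_eq_sum_sq_inner (m n : ℕ) (A : Matrix (Fin m) (Fin m) ℝ)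
    (hA : Aᵀ * A = 1) (x : Fin n → Fin m → ℝ)
    (X : Matrix (Fin m) (Fin n) ℝ) (hX : ∀ i j, X i j = x j i)
    (heq : ∑ i : Fin n, ∑ j : Fin n, (x i ⬝ᵥ A.mulVec (x j)) ^ 2 =
      ∑ i : Fin n, ∑ j : Fin n, (x i ⬝ᵥ x j) ^ 2) :
    (X * Xᵀ) * A = A * (X * Xᵀ) := by
  obtain rfl : X = (of x)ᵀ := Matrix.ext hX
  have hgram := sum_sq_dotProduct_mulVec x 1
  simp only [transpose_one, Matrix.one_mul, Matrix.mul_one, one_mulVec] at hgram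
  rw [sum_sq_dotProduct_mulVec, hgram] at heq
  rw [transpose_transpose]
  exact commute_of_trace_conj_mul_eq hA (by rw [IsSymm, transpose_mul, transpose_transpose]) heq
end

section
/- Let x₁,…,xₙ be vectors in a real inner product space whose span has dimension m. Then m · Σ_{i,j} ⟨x_i, x_j⟩² ≥ Σ_{i,j} |x_i|²|x_j|² = (Σ_i |x_i|²)². -/
open Matrix

lemma sum_sum_sq_sum_eq {n m : ℕ} (c : Fin n → Fin m → ℝ) :
    ∑ i : Fin n, ∑ j : Fin n, (∑ k : Fin m, c i k * c j k) ^ 2 =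
      ∑ k : Fin m, ∑ l : Fin m, (∑ i : Fin n, c i k * c i l) ^ 2 := by
  have swap4 : ∀ (f : Fin n → Fin n → Fin m → Fin m → ℝ),
      ∑ i, ∑ j, ∑ k, ∑ l, f i j k l = ∑ k, ∑ l, ∑ i, ∑ j, f i j k l := by
    intro f
    calc ∑ i, ∑ j, ∑ k, ∑ l, f i j k l
        = ∑ i, ∑ k, ∑ j, ∑ l, f i j k l :=
          Finset.sum_congr rfl fun i _ => Finset.sum_comm
      _ = ∑ k, ∑ i, ∑ j, ∑ l, f i j k l := Finset.sum_comm
      _ = ∑ k, ∑ i, ∑ l, ∑ j, f i j k l :=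
          Finset.sum_congr rfl fun k _ =>
            Finset.sum_congr rfl fun i _ => Finset.sum_comm
      _ = ∑ k, ∑ l, ∑ i, ∑ j, f i j k l :=
          Finset.sum_congr rfl fun k _ => Finset.sum_comm
  simp only [sq, Finset.sum_mul_sum]
  rw [swap4]
  exact Finset.sum_congr rfl fun k _ => Finset.sum_congr rfl fun l _ =>
    Finset.sum_congr rfl fun i _ => Finset.sum_congr rfl fun j _ => by ring

/-- If the span of x₁,…,xₙ has dimension m, then
m·Σ_{i,j}⟨x_i,x_j⟩² ≥ Σ_{i,j}|x_i|²|x_j|² = (Σ_i |x_i|²)². -/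
theorem dim_mul_sum_sq_inner_ge (N n m : ℕ) (x : Fin n → Fin N → ℝ)
    (hdim : Module.finrank ℝ (Submodule.span ℝ (Set.range x)) = m) :
    (m : ℝ) * ∑ i : Fin n, ∑ j : Fin n, (x i ⬝ᵥ x j) ^ 2 ≥
      ∑ i : Fin n, ∑ j : Fin n, (x i ⬝ᵥ x i) * (x j ⬝ᵥ x j) ∧
    ∑ i : Fin n, ∑ j : Fin n, (x i ⬝ᵥ x i) * (x j ⬝ᵥ x j) =
      (∑ i : Fin n, x i ⬝ᵥ x i) ^ 2 := by
  constructor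
  · -- view x i inside EuclideanSpace
    set E := EuclideanSpace ℝ (Fin N)
    set y : Fin n → E := fun i => WithLp.toLp 2 (x i) with hy
    set V : Submodule ℝ E := Submodule.span ℝ (Set.range y) with hV
    have hVdim : Module.finrank ℝ V = m := by
      have hVm : V = (Submodule.span ℝ (Set.range x)).map
          ((WithLp.linearEquiv 2 ℝ (Fin N → ℝ)).symm : (Fin N → ℝ) →ₗ[ℝ] E) := by
        rw [hV, ← Submodule.span_image, ← Set.range_comp]; rfl
      rw [hVm, LinearEquiv.finrank_map_eq, hdim]
    have hmem : ∀ i, y i ∈ V := fun i => Submodule.subset_span ⟨i, rfl⟩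
    set z : Fin n → V := fun i => ⟨y i, hmem i⟩ with hz
    let b : OrthonormalBasis (Fin m) ℝ V :=
      (stdOrthonormalBasis ℝ V).reindex (finCongr hVdim)
    set c : Fin n → Fin m → ℝ := fun i k => inner ℝ (b k) (z i) with hc
    have hdot : ∀ i j, x i ⬝ᵥ x j = ∑ k : Fin m, c i k * c j k := by
      intro i j
      have h1 : (inner ℝ (z i) (z j) : ℝ) = x i ⬝ᵥ x j := by
        simp [hz, dotProduct, PiLp.inner_apply, RCLike.inner_apply, y, E, mul_comm]
      rw [← h1, ← b.sum_inner_mul_inner (z i) (z j)]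
      refine Finset.sum_congr rfl fun k _ => ?_
      exact congrArg (fun t => t * (inner ℝ (b k) (z j) : ℝ)) (real_inner_comm (z i) (b k)).symm
    simp only [hdot]
    rw [sum_sum_sq_sum_eq]
    set S : Fin m → Fin m → ℝ := fun k l => ∑ i : Fin n, c i k * c i l with hS
    have key1 : (∑ i : Fin n, ∑ k : Fin m, c i k * c i k) = ∑ k : Fin m, S k k := by
      rw [Finset.sum_comm]
    calc ∑ i : Fin n, ∑ j : Fin n,
          (∑ k : Fin m, c i k * c i k) * (∑ k : Fin m, c j k * c j k)
        = (∑ k : Fin m, S k k) ^ 2 := by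
          rw [← Finset.sum_mul_sum, ← key1]; ring
      _ ≤ (m : ℝ) * ∑ k : Fin m, (S k k) ^ 2 := by
          have := sq_sum_le_card_mul_sum_sq (s := (Finset.univ : Finset (Fin m)))
            (f := fun k => S k k)
          simpa using this
      _ ≤ (m : ℝ) * ∑ k : Fin m, ∑ l : Fin m, (S k l) ^ 2 := by
          apply mul_le_mul_of_nonneg_left _ (by positivity)
          apply Finset.sum_le_sum
          intro k _
          exact Finset.single_le_sum (fun l _ => sq_nonneg (S k l)) (Finset.mem_univ k)
  · rw [sq, Finset.sum_mul_sum]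
end

section
/- Let n be odd, and suppose X₁, X₂ are real matrices with X₁^T X₁ + X₂^T X₂ = Id_n such that all nonzero eigenvalues of X₁^T X₁ and all nonzero eigenvalues of X₂^T X₂ have even multiplicity. Then a contradiction follows; i.e., no such X₁, X₂ exist. -/
/-!
`X₁ᵀX₁` is symmetric, so `ℝⁿ` is the direct sum of its eigenspaces. Since `X₂ᵀX₂ = 1 - X₁ᵀX₁`,
the kernel of `X₁ᵀX₁` is the `1`-eigenspace of `X₂ᵀX₂`; hence every eigenspace of `X₁ᵀX₁`,
including the one for `0`, has even dimension, and so does `ℝⁿ`.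
-/

open Matrix

open Module Module.End

namespace Module.End

variable {R M N : Type*} [CommRing R] [AddCommGroup M] [Module R M] [AddCommGroup N] [Module R N]

theorem eigenspace_eq_eigenspace_one_sub {f g : End R M} (hfg : f + g = 1) (μ : R) :
    eigenspace f μ = eigenspace g (1 - μ) := by
  ext x
  have hx : f x + g x = x := congr($hfg x)
  rw [mem_eigenspace_iff, mem_eigenspace_iff, sub_smul, one_smul]
  constructor
  · intro hfx
    rw [← hfx]
    exact eq_sub_of_add_eq' hx
  · intro hgx
    rw [eq_sub_of_add_eq hx, hgx, sub_sub_cancel]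

theorem eigenspace_conj (e : M ≃ₗ[R] N) (f : End R M) (μ : R) :
    eigenspace (e.conj f) μ = (eigenspace f μ).map (e : M →ₗ[R] N) := by
  ext y
  rw [Submodule.mem_map_equiv, mem_eigenspace_iff, mem_eigenspace_iff, LinearEquiv.conj_apply_apply,
    ← e.eq_symm_apply, map_smul]

end Module.End

theorem Matrix.finrank_eigenspace_toLpLin {K ι : Type*} [Field K] [Fintype ι] [DecidableEq ι]
    (p : ENNReal) (A : Matrix ι ι K) (μ : K) :
    finrank K (eigenspace (toLpLin p p A) μ) = finrank K (eigenspace A.mulVecLin μ) := by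
  change finrank K (eigenspace ((WithLp.linearEquiv p K (ι → K)).symm.conj A.mulVecLin) μ) = _
  rw [eigenspace_conj, LinearEquiv.finrank_map_eq]

namespace LinearMap.IsSymmetric

variable {𝕜 E : Type*} [RCLike 𝕜] [NormedAddCommGroup E] [InnerProductSpace 𝕜 E]
  [FiniteDimensional 𝕜 E] {T : E →ₗ[𝕜] E}

theorem finrank_eq_sum_finrank_eigenspace (hT : T.IsSymmetric) :
    finrank 𝕜 E = ∑ μ : Eigenvalues T, finrank 𝕜 (eigenspace T μ) := by
  classical
  rw [← (LinearEquiv.ofBijective (DirectSum.coeLinearMap _) hT.direct_sum_isInternal).finrank_eq,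
    finrank_directSum]

theorem even_finrank_of_add_eq_one (hT : T.IsSymmetric) {S : E →ₗ[𝕜] E} (hTS : T + S = 1)
    (hT₀ : ∀ μ : 𝕜, μ ≠ 0 → Even (finrank 𝕜 (eigenspace T μ)))
    (hS₁ : Even (finrank 𝕜 (eigenspace S 1))) : Even (finrank 𝕜 E) := by
  rw [hT.finrank_eq_sum_finrank_eigenspace]
  refine Finset.even_sum _ fun μ _ ↦ ?_
  obtain hμ | hμ := eq_or_ne (μ : 𝕜) 0
  · rwa [hμ, eigenspace_eq_eigenspace_one_sub hTS, sub_zero]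
  · exact hT₀ μ hμ

end LinearMap.IsSymmetric

/-- For n odd, there are no matrices X₁, X₂ with X₁ᵀX₁ + X₂ᵀX₂ = Id_n such that all
nonzero eigenvalues of X₁ᵀX₁ and of X₂ᵀX₂ have even multiplicity. -/
theorem no_odd_dimensional (m₁ m₂ n : ℕ) (hn : Odd n)
    (X₁ : Matrix (Fin m₁) (Fin n) ℝ) (X₂ : Matrix (Fin m₂) (Fin n) ℝ)
    (h : X₁ᵀ * X₁ + X₂ᵀ * X₂ = 1)
    (h₁ : ∀ μ : ℝ, μ ≠ 0 →
      Even (Module.finrank ℝ (Module.End.eigenspace (X₁ᵀ * X₁).mulVecLin μ)))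
    (h₂ : ∀ μ : ℝ, μ ≠ 0 →
      Even (Module.finrank ℝ (Module.End.eigenspace (X₂ᵀ * X₂).mulVecLin μ))) :
    False := by
  have hT : (toEuclideanLin (X₁ᵀ * X₁)).IsSymmetric :=
    isSymmetric_toEuclideanLin_iff.mpr (by simpa using isHermitian_conjTranspose_mul_self X₁)
  have hTS : toEuclideanLin (X₁ᵀ * X₁) + toEuclideanLin (X₂ᵀ * X₂) = 1 := by
    rw [← map_add, h, toLpLin_one, Module.End.one_eq_id]
  have hn_even := hT.even_finrank_of_add_eq_one hTS
    (fun μ hμ ↦ (finrank_eigenspace_toLpLin 2 (X₁ᵀ * X₁) μ).symm ▸ h₁ μ hμ)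
    ((finrank_eigenspace_toLpLin 2 (X₂ᵀ * X₂) 1).symm ▸ h₂ 1 one_ne_zero)
  rw [finrank_euclideanSpace_fin] at hn_even
  exact Nat.not_even_iff_odd.mpr hn hn_even
end
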